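/- Let G be a DAG over a value type X with at least two elements, Z ⊆ V with u, v ∉ Z, u ≠ v, and Z = ∅. Then u and v are d-separated given the empty set if and only if for every graph function f compatible with G and every pair of exogenous-term assignments U, U' that agree on all nodes that are not ancestors of u, the evaluations satisfy f_U(v) = f_{U'}(v). -/

import Mathlib

section CausalDefs

variable {V : Type}

/-- The edge relation has no directed cycles. -/
def AcyclicRel (E : V → V → Prop) : Prop := ∀ v, ¬ Relation.TransGen E v v

/-- `b` is a mediator on the (undirected) path `l`. -/
def Mediator (E : V → V → Prop) (l : List V) (b : V) : Prop :=
  ∃ a c, [a, b, c] <:+: l ∧ ((E a b ∧ E b c) ∨ (E b a ∧ E c b))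

/-- `b` is a confounder on the (undirected) path `l`. -/
def Confounder (E : V → V → Prop) (l : List V) (b : V) : Prop :=
  ∃ a c, [a, b, c] <:+: l ∧ E b a ∧ E b c

/-- `b` is a collider on the (undirected) path `l`. -/
def Collider (E : V → V → Prop) (l : List V) (b : V) : Prop :=
  ∃ a c, [a, b, c] <:+: l ∧ E a b ∧ E c b

/-- An acyclic undirected path: consecutive nodes joined by an edge in some
direction, no repeated nodes. -/
def UPath (E : V → V → Prop) (l : List V) : Prop :=
  l.Chain' (fun a b => E a b ∨ E b a) ∧ l.Nodup

/-- An acyclic undirected path from `u` to `v` (with at least one edge). -/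
def UPathFrom (E : V → V → Prop) (u v : V) (l : List V) : Prop :=
  UPath E l ∧ l.head? = some u ∧ l.getLast? = some v ∧ 2 ≤ l.length

/-- A directed walk from `u` to `v` (nodes may repeat). -/
def DirWalkFrom (E : V → V → Prop) (u v : V) (l : List V) : Prop :=
  l.Chain' E ∧ l.head? = some u ∧ l.getLast? = some v

/-- An acyclic directed path from `u` to `v`. -/
def DirPathFrom (E : V → V → Prop) (u v : V) (l : List V) : Prop :=
  l.Chain' E ∧ l.Nodup ∧ l.head? = some u ∧ l.getLast? = some v

/-- `d` is a descendant of `b` (every node is its own descendant). -/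
def Descendant (E : V → V → Prop) (b d : V) : Prop := Relation.ReflTransGen E b d

/-- The path `l` is d-connected given `Z`: no mediator or confounder on `l` is
in `Z`, and every collider on `l` has a descendant in `Z`. -/
def DConnPath (E : V → V → Prop) (Z : Set V) (l : List V) : Prop :=
  (∀ b, Mediator E l b → b ∉ Z) ∧
  (∀ b, Confounder E l b → b ∉ Z) ∧
  (∀ b, Collider E l b → ∃ d ∈ Z, Descendant E b d)

/-- `u` and `v` are d-connected given `Z`. -/
def DConnected (E : V → V → Prop) (Z : Set V) (u v : V) : Prop :=
  ∃ l, UPathFrom E u v l ∧ DConnPath E Z l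

/-- `u` and `v` are d-separated given `Z`: every acyclic undirected path from
`u` to `v` is blocked. -/
def DSeparated (E : V → V → Prop) (Z : Set V) (u v : V) : Prop :=
  ∀ l, UPathFrom E u v l →
    (∃ b ∈ Z, Mediator E l b ∨ Confounder E l b) ∨
    (∃ b, Collider E l b ∧ ¬ ∃ d ∈ Z, Descendant E b d)

/-- `w` is an unblocked ancestor of `u` given `Z`: `w = u`, or there is a
directed path from `w` to `u` on which neither `w` nor any internal node
lies in `Z`. -/
def UnblockedAnc (E : V → V → Prop) (Z : Set V) (w u : V) : Prop :=
  w = u ∨ ∃ l : List V, l.Chain' E ∧ l.head? = some w ∧ l.getLast? = some u ∧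
    ∀ x ∈ l.dropLast, x ∉ Z

/-- `x` is a source on the path `l`: an endpoint whose adjacent path edge
points away from it, or an (internal) confounder. -/
def SourceOn (E : V → V → Prop) (l : List V) (x : V) : Prop :=
  (∃ b, [x, b] <+: l ∧ E x b) ∨ (∃ b, [b, x] <:+ l ∧ E x b) ∨ Confounder E l x

end CausalDefs

/-!
With nothing conditioned on, a path is blocked only by a collider, and a collider-free path
between `u` and `v` is a trek `u ← ⋯ ← a → ⋯ → v`; conversely two directed paths from a common
ancestor that meet only at their source form such a path. So d-separation given `∅` says that `u`
and `v` have no common ancestor.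

If they have none, `f_U v` depends only on the terms of the ancestors of `v`, none of which is an
ancestor of `u`. If `a` is a common ancestor, take the graph function that outputs `y` as soon as
its own term or a parent's value is `y`, and `x` otherwise: then `f_U v = y` exactly when `U` takes
the value `y` at an ancestor of `v`, so changing `U` at `a` alone changes `f_U v`.
-/

open Relation

theorem List.two_le_length_of_head?_ne_getLast? {α : Type*} {l : List α}
    (h : l.head? ≠ l.getLast?) : 2 ≤ l.length := by
  match l with
  | [] | [_] => simp at h
  | _ :: _ :: _ => simp

theorem List.triple_infix_append_cases {α : Type*} {a b c : α} {A B : List α}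
    (h : [a, b, c] <:+: A ++ B) : [a, b] <:+: A ∨ [b, c] <:+: B := by
  obtain ⟨s, t, h⟩ := h
  rw [List.append_assoc, List.append_eq_append_iff] at h
  rcases h with ⟨r, rfl, h⟩ | ⟨r, -, rfl⟩
  · rcases r with _ | ⟨a', _ | ⟨b', r⟩⟩
    · exact .inr ⟨[a], t, by simpa using h⟩
    · obtain ⟨rfl, rfl⟩ : a = a' ∧ b :: c :: t = B := by simpa using h
      exact .inr ⟨[], t, rfl⟩
    · obtain ⟨rfl, rfl, -⟩ : a = a' ∧ b = b' ∧ _ := by simpa using h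
      exact .inl ⟨s, r, by simp⟩
  · exact .inr ⟨r ++ [a], t, by simp⟩

section Graph

variable {V : Type} {E : V → V → Prop}

theorem AcyclicRel.asymm (h : AcyclicRel E) {a b : V} (hab : E a b) (hba : E b a) : False :=
  h a (.head hab (.single hba))

theorem AcyclicRel.wellFounded [Finite V] (h : AcyclicRel E) : WellFounded E :=
  have : IsStrictOrder V (TransGen E) := { irrefl := h, trans := fun _ _ _ => TransGen.trans }
  (Finite.wellFounded_of_trans_of_irrefl _).mono fun _ _ => TransGen.single

theorem Collider.mono {l₁ l₂ : List V} {b : V} (h : l₁ <:+: l₂) :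
    Collider E l₁ b → Collider E l₂ b
  | ⟨a, c, hin, hab, hcb⟩ => ⟨a, c, hin.trans h, hab, hcb⟩

theorem DirPathFrom.exists_eq_cons {a b : V} {l : List V} (h : DirPathFrom E a b l) :
    ∃ t, l = a :: t :=
  List.head?_eq_some_iff.1 h.2.2.1

theorem DirPathFrom.suffix {a b x : V} {l t : List V} (h : DirPathFrom E a b l)
    (hs : x :: t <:+ l) : DirPathFrom E x b (x :: t) := by
  obtain ⟨s, rfl⟩ := hs
  exact ⟨h.1.suffix ⟨s, rfl⟩, h.2.1.sublist (List.sublist_append_right _ _), rfl,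
    by simpa using h.2.2.2⟩

theorem exists_dirPathFrom_of_reflTransGen {a b : V} (h : ReflTransGen E a b) :
    ∃ l, DirPathFrom E a b l := by
  induction h using ReflTransGen.head_induction_on with
  | refl => exact ⟨[b], List.isChain_singleton b, List.nodup_singleton b, rfl, rfl⟩
  | @head a c hac _ ih =>
    obtain ⟨l, hl⟩ := ih
    by_cases hal : a ∈ l
    · obtain ⟨s, t, rfl⟩ := List.append_of_mem hal
      exact ⟨_, hl.suffix ⟨s, rfl⟩⟩
    · obtain ⟨t, rfl⟩ := hl.exists_eq_cons
      exact ⟨a :: c :: t, hl.1.cons_cons hac, hl.2.1.cons hal, rfl, by simpa using hl.2.2.2⟩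

theorem exists_dirPathFrom_disjoint {a u v : V} {p q : List V} (hp : DirPathFrom E a u p)
    (hq : DirPathFrom E a v q) :
    ∃ x p' q', DirPathFrom E x u p' ∧ DirPathFrom E x v q' ∧ ∀ y ∈ p', y ∉ q'.tail := by
  induction hn : p.length using Nat.strong_induction_on generalizing a p q with
  | _ n ih =>
  obtain ⟨p₁, rfl⟩ := hp.exists_eq_cons
  obtain ⟨q₁, rfl⟩ := hq.exists_eq_cons
  -- If the legs meet below the source, restart both at a meeting point: the first leg shrinks.
  by_cases hmeet : ∃ y ∈ p₁, y ∈ a :: q₁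
  · obtain ⟨y, hyp, hyq⟩ := hmeet
    obtain ⟨s, t, rfl⟩ := List.append_of_mem hyp
    obtain ⟨s', t', hs'⟩ := List.append_of_mem hyq
    have hlt : (y :: t).length < n := by simp [← hn]
    exact ih _ hlt (hp.suffix ⟨a :: s, rfl⟩) (hq.suffix ⟨s', hs'.symm⟩) rfl
  · refine ⟨a, a :: p₁, a :: q₁, hp, hq, fun y hy hyq => ?_⟩
    rcases List.mem_cons.1 hy with rfl | hy
    · exact (List.nodup_cons.1 hq.2.1).1 hyq
    · exact hmeet ⟨y, hy, List.mem_cons_of_mem a hyq⟩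

theorem uPathFrom_reverse_append_tail {x u v : V} {p q : List V} (hne : u ≠ v)
    (hp : DirPathFrom E x u p) (hq : DirPathFrom E x v q) (hdisj : ∀ y ∈ p, y ∉ q.tail) :
    UPathFrom E u v (p.reverse ++ q.tail) := by
  obtain ⟨p₁, rfl⟩ := hp.exists_eq_cons
  obtain ⟨q₁, rfl⟩ := hq.exists_eq_cons
  obtain ⟨hpc, hpnd, -, hu⟩ := hp
  obtain ⟨hqc, hqnd, -, hv⟩ := hq
  rw [List.tail_cons] at hdisj ⊢
  have hhead : ((x :: p₁).reverse ++ q₁).head? = some u := by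
    simp only [List.head?_append, List.head?_reverse, hu, Option.some_or]
  have hlast : ((x :: p₁).reverse ++ q₁).getLast? = some v := by
    rw [← hv, show x :: q₁ = [x] ++ q₁ from rfl, List.getLast?_append, List.getLast?_append,
      List.getLast?_reverse]
    rfl
  refine ⟨⟨?_, ?_⟩, hhead, hlast,
    List.two_le_length_of_head?_ne_getLast? (by rw [hhead, hlast]; simpa using hne)⟩
  · refine (List.isChain_reverse.2 (hpc.imp fun _ _ => .inr)).append
      (hqc.tail.imp fun _ _ => .inl) fun y hy z hz => ?_
    obtain rfl : x = y := by simpa using hy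
    exact .inl (hqc.rel_head? hz)
  · exact (List.nodup_reverse.2 hpnd).append (List.nodup_cons.1 hqnd).2
      fun y hyp hyq => hdisj y (List.mem_reverse.1 hyp) hyq

theorem not_collider_reverse_append (hacyc : AcyclicRel E) {p q : List V}
    (hp : p.IsChain E) (hq : q.IsChain E) (b : V) : ¬ Collider E (p.reverse ++ q) b := by
  rintro ⟨a, c, hin, hab, hcb⟩
  rcases List.triple_infix_append_cases hin with h | h
  · have hba : List.IsChain (fun a b => E b a) [a, b] :=
      (List.isChain_reverse.2 hp).infix h
    exact hacyc.asymm hab (by simpa using hba)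
  · exact hacyc.asymm (by simpa using hq.infix h) hcb

theorem exists_uPathFrom_not_collider (hacyc : AcyclicRel E) {a u v : V} (hne : u ≠ v)
    (hu : ReflTransGen E a u) (hv : ReflTransGen E a v) :
    ∃ l, UPathFrom E u v l ∧ ∀ b, ¬ Collider E l b := by
  obtain ⟨p, hp⟩ := exists_dirPathFrom_of_reflTransGen hu
  obtain ⟨q, hq⟩ := exists_dirPathFrom_of_reflTransGen hv
  obtain ⟨x, p, q, hp, hq, hdisj⟩ := exists_dirPathFrom_disjoint hp hq
  exact ⟨_, uPathFrom_reverse_append_tail hne hp hq hdisj,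
    not_collider_reverse_append hacyc hp.1 hq.1.tail⟩

theorem reflTransGen_of_not_collider {y z v : V} {t : List V}
    (hc : (y :: z :: t).IsChain fun a b => E a b ∨ E b a)
    (hfree : ∀ b, ¬ Collider E (y :: z :: t) b) (hyz : E y z)
    (hv : (y :: z :: t).getLast? = some v) : ReflTransGen E y v := by
  induction t generalizing y z with
  | nil =>
    obtain rfl : z = v := by simpa using hv
    exact .single hyz
  | cons w t ih =>
    have hzw : E z w := (List.isChain_cons_cons.1 (List.isChain_cons_cons.1 hc).2).1.resolve_right
      fun hwz => hfree z ⟨y, w, ⟨[], t, rfl⟩, hyz, hwz⟩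
    exact .head hyz (ih (List.isChain_cons_cons.1 hc).2
      (fun b hb => hfree b (hb.mono (List.suffix_cons y _).isInfix)) hzw (by simpa using hv))

theorem exists_commonAncestor_of_not_collider {u v : V} :
    ∀ {l : List V}, (l.IsChain fun a b => E a b ∨ E b a) → (∀ b, ¬ Collider E l b) →
      l.head? = some u → l.getLast? = some v → ∃ a, ReflTransGen E a u ∧ ReflTransGen E a v
  | [], _, _, hu, _ => by simp at hu
  | [y], _, _, hu, hv => by
    obtain rfl : y = u := by simpa using hu
    obtain rfl : y = v := by simpa using hv
    exact ⟨y, .refl, .refl⟩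
  | y :: z :: t, hc, hfree, hu, hv => by
    obtain rfl : y = u := by simpa using hu
    obtain ⟨a, hz, hv'⟩ := exists_commonAncestor_of_not_collider (List.isChain_cons_cons.1 hc).2
      (fun b hb => hfree b (hb.mono (List.suffix_cons y _).isInfix)) rfl (by simpa using hv)
    rcases (List.isChain_cons_cons.1 hc).1 with hyz | hzy
    · exact ⟨y, .refl, reflTransGen_of_not_collider hc hfree hyz hv⟩
    · exact ⟨a, hz.tail hzy, hv'⟩

theorem dSeparated_empty_iff_not_exists_commonAncestor (hacyc : AcyclicRel E) {u v : V}
    (hne : u ≠ v) :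
    DSeparated E ∅ u v ↔ ¬ ∃ a, ReflTransGen E a u ∧ ReflTransGen E a v := by
  simp only [DSeparated, Set.mem_empty_iff_false, false_and, exists_false, false_or,
    not_false_eq_true, and_true]
  constructor
  · rintro hsep ⟨a, hu, hv⟩
    obtain ⟨l, hl, hfree⟩ := exists_uPathFrom_not_collider hacyc hne hu hv
    obtain ⟨b, hb⟩ := hsep l hl
    exact hfree b hb
  · intro hnot l hl
    by_contra! hfree
    exact hnot (exists_commonAncestor_of_not_collider hl.1.1 hfree hl.2.1 hl.2.2.1)

end Graph

section Evaluation

variable {V X : Type} {pa : V → List V}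

theorem apply_eq_of_forall_ancestor_eq (hwf : WellFounded fun a b => a ∈ pa b)
    {g : V → X → List X → X} {f : (V → X) → V → X}
    (hf : ∀ U w, f U w = g w (U w) ((pa w).map (f U))) {U U' : V → X} (w : V)
    (h : ∀ a, ReflTransGen (fun a b => a ∈ pa b) a w → U a = U' a) : f U w = f U' w := by
  induction w using hwf.induction with
  | _ w ih =>
  rw [hf U, hf U', h w .refl, List.map_congr_left fun p hp =>
    ih p hp fun a ha => h a (ha.tail hp)]

noncomputable def evalGraph (hwf : WellFounded fun a b => a ∈ pa b)
    (g : V → X → List X → X) (U : V → X) : V → X :=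
  hwf.fix fun w ih => g w (U w) ((pa w).attach.map fun p => ih p.1 p.2)

theorem evalGraph_eq (hwf : WellFounded fun a b => a ∈ pa b) (g : V → X → List X → X)
    (U : V → X) (w : V) :
    evalGraph hwf g U w = g w (U w) ((pa w).map (evalGraph hwf g U)) := by
  rw [evalGraph, hwf.fix_eq]
  simp

def markFlow [DecidableEq X] (x y : X) (_ : V) (uw : X) (pv : List X) : X :=
  if uw = y ∨ y ∈ pv then y else x

theorem eval_markFlow_eq_iff [DecidableEq X] (hwf : WellFounded fun a b => a ∈ pa b)
    {f : (V → X) → V → X} {x y : X}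
    (hf : ∀ U w, f U w = markFlow x y w (U w) ((pa w).map (f U))) (hxy : x ≠ y) (U : V → X)
    (w : V) : f U w = y ↔ ∃ a, ReflTransGen (fun a b => a ∈ pa b) a w ∧ U a = y := by
  induction w using hwf.induction with
  | _ w ih =>
  have hmark : ∀ (c : Prop) [Decidable c], (if c then y else x) = y ↔ c := fun c _ => by
    by_cases c <;> simp_all
  rw [hf, markFlow, hmark]
  constructor
  · rintro (hw | hp)
    · exact ⟨w, .refl, hw⟩
    · obtain ⟨p, hp, hpy⟩ := List.mem_map.1 hp
      obtain ⟨a, ha, hay⟩ := (ih p hp).1 hpy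
      exact ⟨a, ha.tail hp, hay⟩
  · rintro ⟨a, ha, hay⟩
    rcases ha.cases_tail with rfl | ⟨p, ha, hp⟩
    · exact .inl hay
    · exact .inr (List.mem_map.2 ⟨p, hp, (ih p hp).2 ⟨a, ha, hay⟩⟩)

end Evaluation

/-- With empty conditioning set, `u` and `v` are d-separated iff for every
compatible graph function, changing only ancestors of `u` never changes the
value of `v`. -/
theorem dSeparated_empty_iff_noninterference {V X : Type} [Fintype V]
    [DecidableEq X] (hX : ∃ x y : X, x ≠ y)
    (pa : V → List V) (hacyc : AcyclicRel (fun a b => a ∈ pa b))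
    (u v : V) (hne : u ≠ v) :
    DSeparated (fun a b => a ∈ pa b) (∅ : Set V) u v ↔
      ∀ (g : V → X → List X → X) (f : (V → X) → V → X),
        (∀ (U : V → X) (w : V), f U w = g w (U w) ((pa w).map (f U))) →
        ∀ U U' : V → X,
          (∀ a, ¬ Relation.ReflTransGen (fun a b => a ∈ pa b) a u →
            U a = U' a) →
          f U v = f U' v := by
  have hwf := hacyc.wellFounded
  rw [dSeparated_empty_iff_not_exists_commonAncestor hacyc hne]
  constructor
  · intro hsep g f hf U U' hU
    exact apply_eq_of_forall_ancestor_eq hwf hf v fun a hav =>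
      hU a fun hau => hsep ⟨a, hau, hav⟩
  · rintro hni ⟨a, hau, hav⟩
    obtain ⟨x, y, hxy⟩ := hX
    classical
    let U : V → X := fun _ => x
    have hmark := eval_markFlow_eq_iff hwf (evalGraph_eq hwf (markFlow x y)) hxy
    have hflip := hni _ _ (evalGraph_eq hwf (markFlow x y)) U (Function.update U a y) fun b hb =>
      (Function.update_of_ne (by rintro rfl; exact hb hau) _ _).symm
    obtain ⟨_, -, hxy'⟩ := (hmark U v).1 <| hflip.trans <|
      (hmark _ v).2 ⟨a, hav, Function.update_self a y U⟩
    exact hxy hxy'
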